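/- Let Q be real with Q > 1 and let i denote the imaginary unit. Then the Case 2 one-variable braid generator σ is not diagonalizable over ℂ; that is, there is no basis of ℂ¹⁶ consisting of eigenvectors of σ (equivalently, σ is not similar to any diagonal matrix). -/

import Mathlib

open Matrix

noncomputable section

/-- The elementary matrix `E(a,b;c,d)` on `ℂ⁴ ⊗ ℂ⁴`. -/
def E (a b c d : Fin 4) : Matrix (Fin 4 × Fin 4) (Fin 4 × Fin 4) ℂ :=
  Matrix.single (a, b) (c, d) 1

/-- `M ⊗ I₄`, acting on the first two factors of `ℂ⁴ ⊗ ℂ⁴ ⊗ ℂ⁴`. -/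
def op12 (M : Matrix (Fin 4 × Fin 4) (Fin 4 × Fin 4) ℂ) :
    Matrix (Fin 4 × Fin 4 × Fin 4) (Fin 4 × Fin 4 × Fin 4) ℂ :=
  Matrix.of fun x y => M (x.1, x.2.1) (y.1, y.2.1) * (if x.2.2 = y.2.2 then 1 else 0)

/-- `I₄ ⊗ M`, acting on the last two factors of `ℂ⁴ ⊗ ℂ⁴ ⊗ ℂ⁴`. -/
def op23 (M : Matrix (Fin 4 × Fin 4) (Fin 4 × Fin 4) ℂ) :
    Matrix (Fin 4 × Fin 4 × Fin 4) (Fin 4 × Fin 4 × Fin 4) ℂ :=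
  Matrix.of fun x y => (if x.1 = y.1 then 1 else 0) * M (x.2.1, x.2.2) (y.2.1, y.2.2)

/-- The left quantum partial trace `T(C, M)_{a,b} = Σ_{c,d} C_{d,c} M_{(c,a),(d,b)}`. -/
def ptrace (C : Matrix (Fin 4) (Fin 4) ℂ) (M : Matrix (Fin 4 × Fin 4) (Fin 4 × Fin 4) ℂ) :
    Matrix (Fin 4) (Fin 4) ℂ :=
  Matrix.of fun a b => ∑ c : Fin 4, ∑ d : Fin 4, C d c * M (c, a) (d, b)

/-- The Case 2 one-variable braid generator `σ` (indices shifted from 1–4 to 0–3). -/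
def sigma2 (Q : ℝ) : Matrix (Fin 4 × Fin 4) (Fin 4 × Fin 4) ℂ :=
  ((Q : ℝ) : ℂ) • E 0 0 0 0
  - ((Q⁻¹ : ℝ) : ℂ) • (E 1 1 1 1 + E 2 2 2 2)
  + ((Q : ℝ) : ℂ) • E 3 3 3 3
  + ((Q - Q⁻¹ : ℝ) : ℂ) • (E 1 0 1 0 + E 3 2 3 2)
  + (E 0 1 1 0 + E 0 2 2 0 + E 1 0 0 1 + E 2 0 0 2)
  + (E 1 3 3 1 + E 2 3 3 2 + E 3 1 1 3 + E 3 2 2 3)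
  + ((Q⁻¹ : ℝ) : ℂ) • (E 0 3 3 0 + E 3 0 0 3)
  - ((Q : ℝ) : ℂ) • (E 1 2 2 1 + E 2 1 1 2)
  - (Complex.I * ((Q - Q⁻¹ : ℝ) : ℂ)) • (E 3 0 1 2 + E 1 2 3 0)

/-!
A matrix similar to a diagonal matrix over a reduced ring has no Jordan chain of length two:
if `(A - c) v = u` and `(A - c) u = 0`, conjugating to the diagonal form gives
`(dᵢ - c)² xᵢ = 0` for `x = P⁻¹ v`, hence `(dᵢ - c) xᵢ = 0`, so `u = 0`. For `σ` such a chain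
lives in the `σ`-invariant span of `e₀₃, e₁₂, e₂₁, e₃₀`, where `σ` has eigenvalue `1` with
eigenvector `w` and a vector `v` with `σ v = v + (Q² - 1) w`; since `Q² ≠ 1`, `σ` is not
diagonalizable.
-/

section Diagonalizable

variable {n R : Type*} [Fintype n] [DecidableEq n] [CommRing R] [IsReduced R]

theorem Matrix.diagonal_mulVec_eq_zero_of_mulVec_mulVec_eq_zero {d x : n → R}
    (h : diagonal d *ᵥ (diagonal d *ᵥ x) = 0) : diagonal d *ᵥ x = 0 := by
  ext i
  have hi : d i * (d i * x i) = 0 := by simpa [mulVec_diagonal] using congrFun h i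
  simpa [mulVec_diagonal] using
    (IsReduced.eq_zero _ ⟨2, by linear_combination x i * hi⟩ : d i * x i = 0)

theorem Matrix.mulVec_eq_zero_of_mulVec_mulVec_eq_zero_of_eq_conj_diagonal
    {A P : Matrix n n R} {d : n → R} (hP : IsUnit P) (hA : A = P * diagonal d * P⁻¹)
    {x : n → R} (h : A *ᵥ (A *ᵥ x) = 0) : A *ᵥ x = 0 := by
  have hdet := (isUnit_iff_isUnit_det P).mp hP
  have hconj : ∀ y, diagonal d *ᵥ (P⁻¹ *ᵥ y) = P⁻¹ *ᵥ (A *ᵥ y) := fun y => by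
    rw [mulVec_mulVec, mulVec_mulVec, hA, ← Matrix.mul_assoc, ← Matrix.mul_assoc,
      nonsing_inv_mul _ hdet, Matrix.one_mul]
  have hdiag := diagonal_mulVec_eq_zero_of_mulVec_mulVec_eq_zero (d := d) (x := P⁻¹ *ᵥ x)
    (by rw [hconj, hconj, h, mulVec_zero])
  rw [hA, ← mulVec_mulVec, ← mulVec_mulVec, hdiag, mulVec_zero]

theorem Matrix.eq_zero_of_mulVec_eq_smul_add_of_eq_conj_diagonal
    {A P : Matrix n n R} {d : n → R} (hP : IsUnit P) (hA : A = P * diagonal d * P⁻¹) (c : R)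
    {u v : n → R} (hv : A *ᵥ v = c • v + u) (hu : A *ᵥ u = c • u) : u = 0 := by
  have hshift : A - c • 1 = P * diagonal (fun i => d i - c) * P⁻¹ := by
    have hdiag : diagonal (fun i => d i - c) = diagonal d - c • 1 := by
      rw [smul_one_eq_diagonal, diagonal_sub]
    rw [hdiag, Matrix.mul_sub, Matrix.sub_mul, Matrix.mul_smul, Matrix.smul_mul, Matrix.mul_one,
      mul_nonsing_inv _ ((isUnit_iff_isUnit_det P).mp hP), hA]
  have hBv : (A - c • 1) *ᵥ v = u := by
    rw [sub_mulVec, hv, smul_mulVec, one_mulVec, add_sub_cancel_left]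
  have hBu : (A - c • 1) *ᵥ u = 0 := by
    rw [sub_mulVec, hu, smul_mulVec, one_mulVec, sub_self]
  rw [← hBv]
  exact mulVec_eq_zero_of_mulVec_mulVec_eq_zero_of_eq_conj_diagonal hP hshift (by rw [hBv, hBu])

end Diagonalizable

def sigma2Eigenvector (Q : ℝ) : Fin 4 × Fin 4 → ℂ := fun p =>
  ![![0, 0, 0, 1], ![0, 0, Complex.I, 0], ![0, -Complex.I * Q, 0, 0], ![Q, 0, 0, 0]] p.1 p.2

def sigma2GenEigenvector (Q : ℝ) : Fin 4 × Fin 4 → ℂ := fun p =>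
  ![![0, 0, 0, 1 - (Q : ℂ) ^ 2], ![0, 0, Complex.I * ((Q : ℂ) ^ 2 + 1), 0],
    ![0, -2 * Complex.I * Q, 0, 0], ![0, 0, 0, 0]] p.1 p.2

theorem sigma2Eigenvector_ne_zero (Q : ℝ) : sigma2Eigenvector Q ≠ 0 := fun h => by
  simpa [sigma2Eigenvector] using congrFun h (0, 3)

theorem sigma2_mulVec_eigenvector {Q : ℝ} (hQ : Q ≠ 0) :
    sigma2 Q *ᵥ sigma2Eigenvector Q = sigma2Eigenvector Q := by
  have hQ' : (Q : ℂ) ≠ 0 := by exact_mod_cast hQ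
  ext ⟨a, b⟩
  fin_cases a <;> fin_cases b <;>
    simp [sigma2, E, mulVec, dotProduct, Fintype.sum_prod_type, Fin.sum_univ_four, single_apply,
      sigma2Eigenvector] <;>
    grind [Complex.I_sq]

theorem sigma2_mulVec_genEigenvector {Q : ℝ} (hQ : Q ≠ 0) :
    sigma2 Q *ᵥ sigma2GenEigenvector Q =
      sigma2GenEigenvector Q + ((Q : ℂ) ^ 2 - 1) • sigma2Eigenvector Q := by
  have hQ' : (Q : ℂ) ≠ 0 := by exact_mod_cast hQ
  ext ⟨a, b⟩
  fin_cases a <;> fin_cases b <;>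
    simp [sigma2, E, mulVec, dotProduct, Fintype.sum_prod_type, Fin.sum_univ_four, single_apply,
      sigma2Eigenvector, sigma2GenEigenvector] <;>
    grind [Complex.I_sq]

/-- The Case 2 braid generator `σ` is not diagonalizable over `ℂ`: it is not similar to
any diagonal matrix. -/
theorem case2_not_diagonalizable (Q : ℝ) (hQ : 1 < Q) :
    ¬ ∃ (P : Matrix (Fin 4 × Fin 4) (Fin 4 × Fin 4) ℂ) (d : Fin 4 × Fin 4 → ℂ),
        IsUnit P ∧ sigma2 Q = P * Matrix.diagonal d * P⁻¹ := by
  rintro ⟨P, d, hP, hσ⟩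
  have hQ0 : Q ≠ 0 := by positivity
  have hQ2 : (Q : ℂ) ^ 2 - 1 ≠ 0 := by
    have : Q ^ 2 - 1 ≠ 0 := by nlinarith
    exact_mod_cast this
  refine smul_ne_zero hQ2 (sigma2Eigenvector_ne_zero Q) ?_
  exact eq_zero_of_mulVec_eq_smul_add_of_eq_conj_diagonal hP hσ 1
    (by rw [one_smul]; exact sigma2_mulVec_genEigenvector hQ0)
    (by rw [one_smul, mulVec_smul, sigma2_mulVec_eigenvector hQ0])
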